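/- For all p, q ∈ ℂ with p ≠ 0, q ≠ 0 and p ≠ q: if L and L′ are complex Lie algebras admitting bases realizing the bracket patterns d₆(p,q) and d₆(p−q,p) respectively, then L and L′ are isomorphic as Lie algebras over ℂ. -/

import Mathlib

/-- `Realizes L c` means that the complex Lie algebra `L` admits a basis `e₁, …, e₅`
(indexed by `Fin 5`) in which the brackets of basis vectors are given by the
structure constants `c`, i.e. `⁅eᵢ, eⱼ⁆ = ∑ₖ c i j k • eₖ` for all `i < j`,
all brackets of basis vectors being determined by these via antisymmetry. -/
def Realizes (L : Type) [LieRing L] [LieAlgebra ℂ L]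
    (c : Fin 5 → Fin 5 → Fin 5 → ℂ) : Prop :=
  ∃ e : Module.Basis (Fin 5) ℂ L, ∀ i j : Fin 5, i < j →
    ⁅e i, e j⁆ = ∑ k, c i j k • e k

/-- The bracket pattern `d₆(p,q)`: `[e₂,e₄]=e₁+p·e₂`, `[e₃,e₄]=e₂+q·e₃`, `[e₁,e₅]=−p·e₁`, `[e₂,e₅]=e₁`, `[e₃,e₅]=e₂+(q−p)·e₃`, all other brackets zero. -/
def d6 (p q : ℂ) : Fin 5 → Fin 5 → Fin 5 → ℂ := fun i j =>
  if i = 1 ∧ j = 3 then ![1, p, 0, 0, 0]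
  else if i = 2 ∧ j = 3 then ![0, 1, q, 0, 0]
  else if i = 0 ∧ j = 4 then ![-p, 0, 0, 0, 0]
  else if i = 1 ∧ j = 4 then ![1, 0, 0, 0, 0]
  else if i = 2 ∧ j = 4 then ![0, 1, q - p, 0, 0]
  else 0

/-!
Let `V = span(e₁, e₂, e₃)`, an abelian ideal. In `d₆(p,q)`, `ad e₄` and `ad e₅` act on `V` as `-A`
and `-(A - p)`, where `A` has eigenvalues `0, p, q` and `e₃` is a cyclic vector. Replacing
`(e₄, e₅)` by `(-e₅, ((q - p) e₄ - q e₅) / p)` replaces `A` by `p - A` and `A - p` by `q - A`;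
the vectors `A(A - q) e₃, -A e₃, e₃` then realize the pattern `d₆(p - q, p)`.
-/

open Module

section General

variable {R ι L L' : Type*} [CommRing R] [LieRing L] [LieAlgebra R L] [LieRing L']
  [LieAlgebra R L'] [LinearOrder ι]

theorem LinearMap.map_lie_of_basis (b : Basis ι R L) (f : L →ₗ[R] L')
    (h : ∀ i j, i < j → f ⁅b i, b j⁆ = ⁅f (b i), f (b j)⁆) (x y : L) :
    f ⁅x, y⁆ = ⁅f x, f y⁆ := by
  let bracket : L →ₗ[R] L →ₗ[R] L' := (LieModule.toEnd R L L : L →ₗ[R] Module.End R L).compr₂ f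
  let bracket' : L →ₗ[R] L →ₗ[R] L' :=
    (LieModule.toEnd R L' L' : L' →ₗ[R] Module.End R L').compl₁₂ f f
  suffices bracket = bracket' from LinearMap.congr_fun₂ this x y
  refine LinearMap.ext_basis b b fun i j => ?_
  change f ⁅b i, b j⁆ = ⁅f (b i), f (b j)⁆
  rcases lt_trichotomy i j with hij | rfl | hji
  · exact h i j hij
  · simp
  · rw [← lie_skew, map_neg, h j i hji, lie_skew]


variable [Fintype ι]

def skewExtend (c : ι → ι → ι → R) (i j : ι) : ι → R :=
  if i < j then c i j else if j < i then -c j i else 0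

theorem Module.Basis.lie_eq_sum_skewExtend {b : Basis ι R L} {c : ι → ι → ι → R}
    (h : ∀ i j, i < j → ⁅b i, b j⁆ = ∑ k, c i j k • b k) (i j : ι) :
    ⁅b i, b j⁆ = ∑ k, skewExtend c i j k • b k := by
  unfold skewExtend
  rcases lt_trichotomy i j with hij | rfl | hji
  · simp [hij, h i j hij]
  · simp
  · simp [hji, hji.not_gt, ← lie_skew (b i), h j i hji]

theorem Module.Basis.lie_sum_smul {b : Basis ι R L} {c : ι → ι → ι → R}
    (h : ∀ i j, i < j → ⁅b i, b j⁆ = ∑ k, c i j k • b k) (x y : ι → R) :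
    ⁅∑ i, x i • b i, ∑ j, y j • b j⁆ =
      ∑ k, (∑ i, ∑ j, x i * y j * skewExtend c i j k) • b k := by
  simp only [sum_lie, lie_sum, smul_lie, lie_smul, b.lie_eq_sum_skewExtend h, Finset.smul_sum,
    smul_smul, Finset.sum_smul]
  rw [Finset.sum_comm]
  refine (Finset.sum_congr rfl fun i _ => Finset.sum_comm).trans (Finset.sum_comm.trans ?_)
  refine Finset.sum_congr rfl fun k _ => Finset.sum_congr rfl fun i _ =>
    Finset.sum_congr rfl fun j _ => ?_
  rw [mul_left_comm, mul_assoc]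

end General

theorem Realizes.of_basisChange {L : Type} [LieRing L] [LieAlgebra ℂ L]
    {c c' : Fin 5 → Fin 5 → Fin 5 → ℂ} (h : Realizes L c) (P : Matrix (Fin 5) (Fin 5) ℂ)
    (hP : IsUnit P.det)
    (hc : ∀ i j k, i < j → ∑ a, ∑ b, P a i * P b j * skewExtend c a b k = ∑ l, c' i j l * P k l) :
    Realizes L c' := by
  obtain ⟨e, he⟩ := h
  let f := e.map (Matrix.toLinearEquiv e P hP)
  have hf : ∀ i, f i = ∑ j, P j i • e j := fun i => by
    simp [f, Matrix.toLinearEquiv_apply, Matrix.toLin_self]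
  refine ⟨f, fun i j hij => ?_⟩
  simp only [hf, e.lie_sum_smul he, hc i j _ hij, Finset.sum_smul, Finset.smul_sum, smul_smul]
  exact Finset.sum_comm

theorem Realizes.nonempty_lieEquiv {L L' : Type} [LieRing L] [LieAlgebra ℂ L] [LieRing L']
    [LieAlgebra ℂ L'] {c : Fin 5 → Fin 5 → Fin 5 → ℂ} (h : Realizes L c) (h' : Realizes L' c) :
    Nonempty (L ≃ₗ⁅ℂ⁆ L') := by
  obtain ⟨e, he⟩ := h
  obtain ⟨e', he'⟩ := h'
  let g : L ≃ₗ[ℂ] L' := e.equiv e' (Equiv.refl _)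
  have hg : ∀ i, g (e i) = e' i := fun i => e.equiv_apply i e' (Equiv.refl _)
  refine ⟨{ g with map_lie' := fun {x y} => (g : L →ₗ[ℂ] L').map_lie_of_basis e ?_ x y }⟩
  intro i j hij
  simp [hg, he i j hij, he' i j hij]

/-- Column `i` holds the coordinates of the new `i`-th basis vector in terms of the old basis. -/
noncomputable def d6SigmaMatrix (p q : ℂ) : Matrix (Fin 5) (Fin 5) ℂ :=
  !![1, 0, 0, 0, 0;
     p, -1, 0, 0, 0;
     0, -q, 1, 0, 0;
     0, 0, 0, 0, (q - p) / p;
     0, 0, 0, -1, -q / p]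

theorem d6SigmaMatrix_det (p q : ℂ) : (d6SigmaMatrix p q).det = (p - q) / p := by
  simp [d6SigmaMatrix, Matrix.det_succ_row_zero, Fin.sum_univ_succ, Fin.succAbove]
  ring

theorem d6SigmaMatrix_transform {p q : ℂ} (hp : p ≠ 0) (i j k : Fin 5) (hij : i < j) :
    ∑ a, ∑ b, d6SigmaMatrix p q a i * d6SigmaMatrix p q b j * skewExtend (d6 p q) a b k =
      ∑ l, d6 (p - q) p i j l * d6SigmaMatrix p q k l := by
  fin_cases i <;> fin_cases j <;> fin_cases k <;> simp at hij <;>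
    simp [d6SigmaMatrix, d6, skewExtend, Fin.sum_univ_five, hp] <;> field_simp <;> ring

theorem Realizes.d6_sigma {L : Type} [LieRing L] [LieAlgebra ℂ L] {p q : ℂ} (hp : p ≠ 0)
    (hpq : p ≠ q) (h : Realizes L (d6 p q)) : Realizes L (d6 (p - q) p) := by
  refine h.of_basisChange (d6SigmaMatrix p q) ?_ (d6SigmaMatrix_transform hp)
  rw [d6SigmaMatrix_det]
  exact (div_ne_zero (sub_ne_zero.2 hpq) hp).isUnit

theorem d6_sigma_symmetry_general (p q : ℂ) (hp : p ≠ 0) (hpq : p ≠ q)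
    (L L' : Type) [LieRing L] [LieAlgebra ℂ L] [LieRing L'] [LieAlgebra ℂ L']
    (hL : Realizes L (d6 p q)) (hL' : Realizes L' (d6 (p - q) p)) :
    Nonempty (L ≃ₗ⁅ℂ⁆ L') := by
  exact (hL.d6_sigma hp hpq).nonempty_lieEquiv hL'

/-- For `p ≠ 0`, `q ≠ 0`, `p ≠ q`, Lie algebras realizing the patterns
`d₆(p,q)` and `d₆(p−q,p)` are isomorphic. -/
theorem d6_sigma_symmetry (p q : ℂ) (hp : p ≠ 0) (hq : q ≠ 0) (hpq : p ≠ q)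
    (L L' : Type) [LieRing L] [LieAlgebra ℂ L] [LieRing L'] [LieAlgebra ℂ L']
    (hL : Realizes L (d6 p q)) (hL' : Realizes L' (d6 (p - q) p)) :
    Nonempty (L ≃ₗ⁅ℂ⁆ L') :=
  d6_sigma_symmetry_general p q hp hpq L L' hL hL'
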